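/- In the first-differenced two-way fixed effects model Δy_g = Δf_g'ψ + Δε_g, if the origin and destination firms of worker g are connected in the firm mobility network by a path not passing through g of length n_g edges, then the leverage of observation g satisfies P_gg ≤ n_g/(1 + n_g). -/

import Mathlib

/-! Put `x = S⁻¹ Δf_g` and give firm `j` the potential `φ j = ι j ⬝ᵥ x`, so that move `g'`
has `Δf_{g'} ⬝ᵥ x = φ (j₂ g') - φ (j₁ g')`. Expanding `S` gives `P_gg = Σ_{g'} (Δf_{g'} ⬝ᵥ x)²`,
i.e. `P_gg = P_gg² + R` with `R` the energy of the moves other than `g`. Along the path the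
potential differences telescope to `P_gg`; on a simple subpath the edges are distinct moves, at
most `m` of them, so Cauchy–Schwarz gives `P_gg² ≤ m R`. Eliminating `R` yields
`(1 + m) P_gg² ≤ m P_gg`. -/

open Matrix BigOperators Finset

section Leverage

variable {ι n R : Type*} [Fintype ι] [Fintype n] [CommRing R]

theorem dotProduct_sum_vecMulVec_mulVec (u : ι → n → R) (x : n → R) :
    x ⬝ᵥ (∑ i, vecMulVec (u i) (u i)) *ᵥ x = ∑ i, (u i ⬝ᵥ x) ^ 2 := by
  simp only [sum_mulVec, vecMulVec_mulVec, op_smul_eq_smul, dotProduct_comm x, sum_dotProduct,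
    smul_dotProduct, smul_eq_mul, sq]

theorem dotProduct_inv_mulVec_eq_sum_sq [DecidableEq n] {S : Matrix n n R} (u : ι → n → R)
    (hS : S = ∑ i, vecMulVec (u i) (u i)) (hdet : IsUnit S.det) (k : ι) :
    u k ⬝ᵥ S⁻¹ *ᵥ u k = ∑ i, (u i ⬝ᵥ S⁻¹ *ᵥ u k) ^ 2 := by
  have hx : S *ᵥ (S⁻¹ *ᵥ u k) = u k := by
    rw [mulVec_mulVec, mul_nonsing_inv S hdet, one_mulVec]
  nth_rewrite 1 [← hx]
  rw [dotProduct_comm, hS, dotProduct_sum_vecMulVec_mulVec]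

end Leverage

theorem le_div_one_add_of_eq_sq_add {K : Type*} [Field K] [LinearOrder K] [IsStrictOrderedRing K]
    {L r m : K} (hm : 0 ≤ m) (hr : 0 ≤ r) (hL : L = L ^ 2 + r) (hLr : L ^ 2 ≤ m * r) :
    L ≤ m / (1 + m) := by
  have hL0 : 0 ≤ L := hL ▸ by positivity
  have key : (1 + m) * L ^ 2 ≤ m * L := by nlinarith
  rw [le_div_iff₀ (by positivity)]
  rcases hL0.eq_or_lt with rfl | hpos
  · simpa using hm
  · nlinarith

namespace SimpleGraph

variable {V R : Type*} [CommRing R] {G : SimpleGraph V}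

def edgeEnergy (φ : V → R) : Sym2 V → R :=
  Sym2.lift ⟨fun a b => (φ a - φ b) ^ 2, fun a b => sub_sq_comm (φ a) (φ b)⟩

@[simp]
theorem edgeEnergy_mk (φ : V → R) (a b : V) : edgeEnergy φ s(a, b) = (φ a - φ b) ^ 2 := rfl

theorem Walk.sum_darts_sub (φ : V → R) {a b : V} (p : G.Walk a b) :
    (p.darts.map fun d => φ d.snd - φ d.fst).sum = φ b - φ a := by
  induction p with
  | nil => simp
  | cons _ _ ih => simp [ih]

variable [LinearOrder R] [IsStrictOrderedRing R]

theorem edgeEnergy_nonneg (φ : V → R) (e : Sym2 V) : 0 ≤ edgeEnergy φ e := by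
  induction e using Sym2.ind with
  | h a b => exact sq_nonneg _

theorem _root_.List.sq_sum_le_length_mul_sum_sq (l : List R) :
    l.sum ^ 2 ≤ l.length * (l.map (· ^ 2)).sum := by
  have h := sq_sum_le_card_mul_sum_sq (s := univ) (f := fun i : Fin l.length => l[(i : ℕ)])
  rwa [← List.sum_ofFn, ← List.sum_ofFn, List.ofFn_getElem, card_univ, Fintype.card_fin,
    List.ofFn_getElem_eq_map l (· ^ 2)] at h

theorem Walk.sq_sub_le_length_mul_sum_edgeEnergy (φ : V → R) {a b : V} (p : G.Walk a b) :
    (φ b - φ a) ^ 2 ≤ p.length * (p.edges.map (edgeEnergy φ)).sum := by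
  have h := (p.darts.map fun d => φ d.snd - φ d.fst).sq_sum_le_length_mul_sum_sq
  rw [p.sum_darts_sub] at h
  convert h using 3
  · simp
  · simp [Walk.edges, Function.comp_def, Dart.edge, sub_sq_comm]

theorem Reachable.sq_sub_le_card_mul_sum_edgeEnergy [DecidableEq V] (φ : V → R)
    {E : Finset (Sym2 V)} (hE : G.edgeSet ⊆ E) {a b : V} (h : G.Reachable a b) :
    (φ b - φ a) ^ 2 ≤ #E * ∑ e ∈ E, edgeEnergy φ e := by
  -- A path rather than an arbitrary walk, so that no edge is counted twice.
  obtain ⟨p, hp⟩ := h.exists_isPath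
  have hsub : p.edges.toFinset ⊆ E := fun e he =>
    hE (p.edges_subset_edgeSet (List.mem_toFinset.mp he))
  have hlen : (p.length : R) ≤ #E := by
    rw [← p.length_edges, ← List.toFinset_card_of_nodup hp.edges_nodup]
    exact_mod_cast card_le_card hsub
  calc (φ b - φ a) ^ 2 ≤ p.length * (p.edges.map (edgeEnergy φ)).sum :=
        p.sq_sub_le_length_mul_sum_edgeEnergy φ
    _ = p.length * ∑ e ∈ p.edges.toFinset, edgeEnergy φ e := by
        rw [List.sum_toFinset _ hp.edges_nodup]
    _ ≤ #E * ∑ e ∈ E, edgeEnergy φ e := by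
        gcongr
        · exact sum_nonneg fun e _ => edgeEnergy_nonneg φ e
        · exact fun e _ _ => edgeEnergy_nonneg φ e

theorem reachable_of_chain {m : ℕ} (c : Fin (m + 1) → V)
    (h : ∀ s : Fin m, G.Reachable (c s.castSucc) (c s.succ)) :
    G.Reachable (c 0) (c (Fin.last m)) := by
  suffices ∀ i, G.Reachable (c 0) (c i) from this _
  exact Fin.induction (Reachable.refl _) fun s hs => hs.trans (h s)

end SimpleGraph

open SimpleGraph in
theorem sq_sub_le_mul_sum_sq_of_chain {ι V R : Type*} [DecidableEq ι] [DecidableEq V]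
    [CommRing R] [LinearOrder R] [IsStrictOrderedRing R] (φ : V → R) (j₁ j₂ : ι → V) {m : ℕ}
    (c : Fin (m + 1) → V) (w : Fin m → ι)
    (hpath : ∀ s : Fin m,
      (j₁ (w s) = c s.castSucc ∧ j₂ (w s) = c s.succ) ∨
      (j₁ (w s) = c s.succ ∧ j₂ (w s) = c s.castSucc)) :
    (φ (c (Fin.last m)) - φ (c 0)) ^ 2 ≤ m * ∑ i ∈ univ.image w, (φ (j₂ i) - φ (j₁ i)) ^ 2 := by
  set E := (univ.image w).image fun i => s(j₁ i, j₂ i)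
  have hstep : ∀ s : Fin m,
      (fromEdgeSet (E : Set (Sym2 V))).Reachable (c s.castSucc) (c s.succ) := by
    intro s
    by_cases heq : c s.castSucc = c s.succ
    · exact heq ▸ Reachable.refl _
    refine Adj.reachable ((fromEdgeSet_adj _).mpr ⟨?_, heq⟩)
    have hmem : s(j₁ (w s), j₂ (w s)) ∈ E := mem_image_of_mem _ (mem_image_of_mem _ (mem_univ s))
    rcases hpath s with ⟨h₁, h₂⟩ | ⟨h₁, h₂⟩
    · rwa [h₁, h₂] at hmem
    · rwa [h₁, h₂, Sym2.eq_swap] at hmem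
  have hcard : (#E : R) ≤ m := by
    exact_mod_cast card_image_le.trans (card_image_le.trans (by simp))
  calc (φ (c (Fin.last m)) - φ (c 0)) ^ 2 ≤ #E * ∑ e ∈ E, edgeEnergy φ e :=
        (reachable_of_chain c hstep).sq_sub_le_card_mul_sum_edgeEnergy φ
          (by simp [edgeSet_fromEdgeSet])
    _ ≤ m * ∑ i ∈ univ.image w, (φ (j₂ i) - φ (j₁ i)) ^ 2 := by
        gcongr
        · exact sum_nonneg fun e _ => edgeEnergy_nonneg φ e
        · refine (sum_image_le_of_nonneg fun e _ => edgeEnergy_nonneg φ e).trans_eq ?_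
          simp [sub_sq_comm]

theorem leverage_path_bound_general {N J : ℕ}
    (j₁ j₂ : Fin N → Fin (J + 1))
    (ι : Fin (J + 1) → Fin J → ℝ)
    (Δf : Fin N → Fin J → ℝ)
    (hΔf : ∀ g, Δf g = ι (j₂ g) - ι (j₁ g))
    (S : Matrix (Fin J) (Fin J) ℝ)
    (hS : S = ∑ g, vecMulVec (Δf g) (Δf g))
    (hSinv : IsUnit S.det)
    (g : Fin N) (m : ℕ)
    (c : Fin (m + 1) → Fin (J + 1))
    (hc0 : c 0 = j₁ g) (hcm : c (Fin.last m) = j₂ g)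
    (w : Fin m → Fin N)
    (hw : ∀ s, w s ≠ g)
    (hpath : ∀ s : Fin m,
      (j₁ (w s) = c s.castSucc ∧ j₂ (w s) = c s.succ) ∨
      (j₁ (w s) = c s.succ ∧ j₂ (w s) = c s.castSucc)) :
    Δf g ⬝ᵥ S⁻¹.mulVec (Δf g) ≤ (m : ℝ) / (1 + m) := by
  set x := S⁻¹ *ᵥ Δf g
  set φ : Fin (J + 1) → ℝ := fun j => ι j ⬝ᵥ x
  have hmove : ∀ g', Δf g' ⬝ᵥ x = φ (j₂ g') - φ (j₁ g') := fun g' => by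
    rw [hΔf, sub_dotProduct]
  have hsplit : Δf g ⬝ᵥ x = (Δf g ⬝ᵥ x) ^ 2 + ∑ g' ∈ univ.erase g, (Δf g' ⬝ᵥ x) ^ 2 := by
    rw [add_sum_erase _ (fun g' => (Δf g' ⬝ᵥ x) ^ 2) (mem_univ g)]
    exact dotProduct_inv_mulVec_eq_sum_sq Δf hS hSinv g
  have hw' : univ.image w ⊆ univ.erase g := by simpa [subset_iff] using hw
  refine le_div_one_add_of_eq_sq_add m.cast_nonneg (sum_nonneg fun _ _ => sq_nonneg _) hsplit ?_
  calc (Δf g ⬝ᵥ x) ^ 2 = (φ (c (Fin.last m)) - φ (c 0)) ^ 2 := by rw [hmove, hc0, hcm]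
    _ ≤ m * ∑ g' ∈ univ.image w, (φ (j₂ g') - φ (j₁ g')) ^ 2 :=
        sq_sub_le_mul_sum_sq_of_chain φ j₁ j₂ c w hpath
    _ ≤ m * ∑ g' ∈ univ.erase g, (Δf g' ⬝ᵥ x) ^ 2 := by
        simp_rw [hmove]
        gcongr

/-- in the first-differenced two-way fixed effects model, if the
origin and destination firms of worker `g` are connected by a path of `m` edges
in the mobility network that does not use worker `g`, then the leverage satisfies
`P_gg ≤ m/(1+m)`. -/
theorem leverage_path_bound {N J : ℕ}
    (j₁ j₂ : Fin N → Fin (J + 1))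
    (ι : Fin (J + 1) → Fin J → ℝ)
    (hι0 : ι 0 = 0)
    (hι : ∀ j : Fin J, ι j.succ = fun i => if i = j then 1 else 0)
    (Δf : Fin N → Fin J → ℝ)
    (hΔf : ∀ g, Δf g = ι (j₂ g) - ι (j₁ g))
    (S : Matrix (Fin J) (Fin J) ℝ)
    (hS : S = ∑ g, vecMulVec (Δf g) (Δf g))
    (hSinv : IsUnit S.det)
    (g : Fin N) (m : ℕ)
    (c : Fin (m + 1) → Fin (J + 1))
    (hc0 : c 0 = j₁ g) (hcm : c (Fin.last m) = j₂ g)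
    (w : Fin m → Fin N)
    (hw : ∀ s, w s ≠ g)
    (hpath : ∀ s : Fin m,
      (j₁ (w s) = c s.castSucc ∧ j₂ (w s) = c s.succ) ∨
      (j₁ (w s) = c s.succ ∧ j₂ (w s) = c s.castSucc)) :
    Δf g ⬝ᵥ S⁻¹.mulVec (Δf g) ≤ (m : ℝ) / (1 + m) :=
  leverage_path_bound_general j₁ j₂ ι Δf hΔf S hS hSinv g m c hc0 hcm w hw hpath
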